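/- arXiv:math/0411620 — 6 statements merged into one kernel-verified Lean document; each statement's English description precedes it below -/
import Mathlib

section
/- The limit as R → ∞ of the integral ∫₀^π cos(R·cos θ)·sinh(R·sin θ) dθ equals π. -/
/-!
Let `F R` be the integral. Differentiating under the integral sign, `F' R` is the integral over
`[0, π]` of `∂_R (cos (R cos θ) sinh (R sin θ))`, which has the antiderivative
`-R⁻¹ sin (R cos θ) cosh (R sin θ)` in `θ`; hence `F' R = 2 sin R / R` and
`F R = 2 ∫₀ᴿ sinc` (the real form of the contour integral of `sin z / z` over the semicircle).
For the Dirichlet integral, write `1 / t = ∫₀^∞ e^{-ts} ds` and swap the integrals: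
`∫₀ᴿ sinc = π / 2 - ∫₀^∞ e^{-Rs} (cos R + s sin R) / (1 + s²) ds`, and the last integral is at
most `1 / R` in absolute value.
-/

open Real Filter MeasureTheory Set Function Topology

theorem intervalIntegral.hasDerivAt_integral_of_continuous {E : Type*} [NormedAddCommGroup E]
    [NormedSpace ℝ E] {μ : Measure ℝ} [IsLocallyFiniteMeasure μ] {F F' : ℝ → ℝ → E}
    {a b x₀ : ℝ} (hF : ∀ x, Continuous (F x)) (hF' : Continuous (uncurry F'))
    (hderiv : ∀ x t, HasDerivAt (fun x => F x t) (F' x t) x) :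
    HasDerivAt (fun x => ∫ t in a..b, F x t ∂μ) (∫ t in a..b, F' x₀ t ∂μ) x₀ := by
  obtain ⟨C, hC⟩ := ((isCompact_closedBall x₀ 1).prod isCompact_uIcc).exists_bound_of_continuousOn
    hF'.continuousOn
  refine (intervalIntegral.hasDerivAt_integral_of_dominated_loc_of_deriv_le (bound := fun _ => C)
    (Metric.ball_mem_nhds x₀ one_pos) (.of_forall fun x => (hF x).aestronglyMeasurable)
    ((hF x₀).intervalIntegrable _ _) (hF'.uncurry_left x₀).aestronglyMeasurable
    (.of_forall fun t ht x hx => hC (x, t) ⟨Metric.ball_subset_closedBall hx, uIoc_subset_uIcc ht⟩)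
    intervalIntegrable_const (.of_forall fun t _ x _ => hderiv x t)).2

theorem hasDerivAt_cos_mul_sinh (θ r : ℝ) :
    HasDerivAt (fun r => cos (r * cos θ) * sinh (r * sin θ))
      (-cos θ * sin (r * cos θ) * sinh (r * sin θ) + sin θ * cos (r * cos θ) * cosh (r * sin θ))
      r := by
  have hc := ((hasDerivAt_id r).mul_const (cos θ)).cos
  have hs := ((hasDerivAt_id r).mul_const (sin θ)).sinh
  exact (hc.mul hs).congr_deriv (by simp only [id]; ring)

theorem integral_deriv_cos_mul_sinh (r : ℝ) :
    ∫ θ in 0..π, (-cos θ * sin (r * cos θ) * sinh (r * sin θ)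
      + sin θ * cos (r * cos θ) * cosh (r * sin θ)) = 2 * sinc r := by
  rcases eq_or_ne r 0 with rfl | hr
  · norm_num [integral_sin]
  have hanti (θ : ℝ) : HasDerivAt (fun θ => -(sin (r * cos θ) * cosh (r * sin θ)) / r)
      (-cos θ * sin (r * cos θ) * sinh (r * sin θ)
        + sin θ * cos (r * cos θ) * cosh (r * sin θ)) θ := by
    have hc := ((hasDerivAt_cos θ).const_mul r).sin
    have hs := ((hasDerivAt_sin θ).const_mul r).cosh
    exact ((hc.mul hs).neg.div_const r).congr_deriv (by field_simp; ring)
  rw [intervalIntegral.integral_eq_sub_of_hasDerivAt (fun θ _ => hanti θ)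
    (by apply Continuous.intervalIntegrable; fun_prop), sinc_of_ne_zero hr]
  simp only [cos_pi, mul_neg, mul_one, sin_neg, sin_pi, mul_zero, cosh_zero, neg_neg, cos_zero,
    sin_zero]
  ring

theorem integral_cos_mul_sinh_eq_two_mul_integral_sinc (R : ℝ) :
    ∫ θ in 0..π, cos (R * cos θ) * sinh (R * sin θ) = 2 * ∫ t in 0..R, sinc t := by
  have hderiv (r : ℝ) : HasDerivAt (fun R => ∫ θ in 0..π, cos (R * cos θ) * sinh (R * sin θ))
      (2 * sinc r) r := by
    rw [← integral_deriv_cos_mul_sinh]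
    exact intervalIntegral.hasDerivAt_integral_of_continuous (fun x => by fun_prop) (by fun_prop)
      fun r θ => hasDerivAt_cos_mul_sinh θ r
  rw [← intervalIntegral.integral_const_mul, intervalIntegral.integral_eq_sub_of_hasDerivAt
    (fun r _ => hderiv r) ((continuous_sinc.const_mul 2).intervalIntegrable _ _)]
  simp

theorem integral_exp_neg_mul_Ioi {t : ℝ} (ht : 0 < t) : ∫ s in Ioi 0, exp (-t * s) = t⁻¹ := by
  rw [integral_exp_mul_Ioi (neg_lt_zero.mpr ht), mul_zero, exp_zero, neg_div, div_neg, neg_neg,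
    one_div]

theorem sinc_eq_integral_exp_neg_mul_mul_sin {t : ℝ} (ht : 0 < t) :
    sinc t = ∫ s in Ioi 0, exp (-t * s) * sin t := by
  rw [integral_mul_const, integral_exp_neg_mul_Ioi ht, sinc_of_ne_zero ht.ne', inv_mul_eq_div]

theorem integral_exp_neg_mul_mul_sin (s R : ℝ) :
    ∫ t in 0..R, exp (-t * s) * sin t =
      (1 - exp (-R * s) * (cos R + s * sin R)) / (1 + s ^ 2) := by
  have hanti (t : ℝ) : HasDerivAt (fun t => -(exp (-t * s) * (cos t + s * sin t)) / (1 + s ^ 2))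
      (exp (-t * s) * sin t) t := by
    have he := ((hasDerivAt_neg t).mul_const s).exp
    have hcs := (hasDerivAt_cos t).add ((hasDerivAt_sin t).const_mul s)
    exact ((he.mul hcs).neg.div_const _).congr_deriv
      (by simp only [Pi.add_apply]; field_simp; ring)
  rw [intervalIntegral.integral_eq_sub_of_hasDerivAt (fun t _ => hanti t)
    (by apply Continuous.intervalIntegrable; fun_prop)]
  simp only [neg_mul, neg_zero, zero_mul, exp_zero, cos_zero, sin_zero, mul_zero, add_zero, mul_one]
  ring

theorem abs_cos_add_mul_sin_div_le_one (s R : ℝ) : |(cos R + s * sin R) / (1 + s ^ 2)| ≤ 1 := by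
  have hpos : 0 < 1 + s ^ 2 := by positivity
  rw [abs_div, abs_of_pos hpos, div_le_one hpos]
  -- `(cos R + s sin R)² + (s cos R - sin R)² = 1 + s²`
  have h := sin_sq_add_cos_sq R
  apply abs_le.mpr ⟨?_, ?_⟩ <;> nlinarith [sq_nonneg (s * cos R - sin R), sq_nonneg s]

theorem integrableOn_exp_neg_mul_mul_cos_add_mul_sin_div {R : ℝ} (hR : 0 < R) :
    IntegrableOn (fun s => exp (-R * s) * ((cos R + s * sin R) / (1 + s ^ 2))) (Ioi 0) :=
  (exp_neg_integrableOn_Ioi 0 hR).mul_bdd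
    (Continuous.div (by fun_prop) (by fun_prop) fun s => by positivity).aestronglyMeasurable
    (.of_forall fun s => abs_cos_add_mul_sin_div_le_one s R)

theorem abs_integral_exp_neg_mul_mul_cos_add_mul_sin_div_le {R : ℝ} (hR : 0 < R) :
    |∫ s in Ioi 0, exp (-R * s) * ((cos R + s * sin R) / (1 + s ^ 2))| ≤ R⁻¹ := by
  rw [← Real.norm_eq_abs, ← integral_exp_neg_mul_Ioi hR]
  refine norm_integral_le_of_norm_le (exp_neg_integrableOn_Ioi 0 hR) (.of_forall fun s => ?_)
  rw [norm_mul, norm_of_nonneg (exp_pos _).le]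
  exact mul_le_of_le_one_right (exp_pos _).le (abs_cos_add_mul_sin_div_le_one s R)

theorem integrable_exp_neg_mul_mul_sin_prod (R : ℝ) :
    Integrable (uncurry fun t s => exp (-t * s) * sin t)
      ((volume.restrict (Ioc 0 R)).prod (volume.restrict (Ioi 0))) := by
  refine (integrable_prod_iff (by fun_prop)).mpr ⟨?_, ?_⟩
  · filter_upwards [ae_restrict_mem measurableSet_Ioc] with t ht
    simp only [uncurry_apply_pair]
    exact (exp_neg_integrableOn_Ioi 0 ht.1).mul_const _
  · refine integrable_sinc.abs.congr ?_
    filter_upwards [ae_restrict_mem measurableSet_Ioc] with t ht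
    simp only [uncurry_apply_pair, norm_mul, norm_of_nonneg (exp_pos _).le, Real.norm_eq_abs]
    rw [integral_mul_const, integral_exp_neg_mul_Ioi ht.1, sinc_of_ne_zero ht.1.ne', abs_div,
      abs_of_pos ht.1, inv_mul_eq_div]

theorem integral_sinc_eq {R : ℝ} (hR : 0 < R) :
    ∫ t in 0..R, sinc t =
      π / 2 - ∫ s in Ioi 0, exp (-R * s) * ((cos R + s * sin R) / (1 + s ^ 2)) := by
  calc ∫ t in 0..R, sinc t
      = ∫ t in Ioc 0 R, ∫ s in Ioi 0, exp (-t * s) * sin t := by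
        rw [intervalIntegral.integral_of_le hR.le]
        exact setIntegral_congr_fun measurableSet_Ioc fun t ht =>
          sinc_eq_integral_exp_neg_mul_mul_sin ht.1
    _ = ∫ s in Ioi 0, ∫ t in 0..R, exp (-t * s) * sin t := by
        rw [integral_integral_swap (integrable_exp_neg_mul_mul_sin_prod R)]
        simp only [intervalIntegral.integral_of_le hR.le]
    _ = ∫ s in Ioi 0, ((1 + s ^ 2)⁻¹ - exp (-R * s) * ((cos R + s * sin R) / (1 + s ^ 2))) := by
        congr 1 with s
        rw [integral_exp_neg_mul_mul_sin]
        ring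
    _ = _ := by
        rw [integral_sub integrable_inv_one_add_sq.integrableOn
          (integrableOn_exp_neg_mul_mul_cos_add_mul_sin_div hR), integral_Ioi_inv_one_add_sq,
          arctan_zero, sub_zero]

theorem tendsto_integral_sinc_atTop :
    Tendsto (fun R => ∫ t in 0..R, sinc t) atTop (𝓝 (π / 2)) := by
  have hrem : Tendsto (fun R => ∫ s in Ioi 0, exp (-R * s) * ((cos R + s * sin R) / (1 + s ^ 2)))
      atTop (𝓝 0) :=
    squeeze_zero_norm' ((eventually_gt_atTop 0).mono fun R hR =>
      abs_integral_exp_neg_mul_mul_cos_add_mul_sin_div_le hR) tendsto_inv_atTop_zero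
  have hlim := (tendsto_const_nhds (x := π / 2)).sub hrem
  rw [sub_zero] at hlim
  exact hlim.congr' ((eventually_gt_atTop 0).mono fun R hR => (integral_sinc_eq hR).symm)

theorem strange_integral_sin_z_over_z_real_part :
    Tendsto (fun R : ℝ =>
      ∫ θ in (0:ℝ)..π, Real.cos (R * Real.cos θ) * Real.sinh (R * Real.sin θ))
      atTop (nhds π) := by
  simp only [integral_cos_mul_sinh_eq_two_mul_integral_sinc]
  simpa [mul_div_cancel₀] using tendsto_integral_sinc_atTop.const_mul 2
end

section
/- The limit as R → ∞ of the integral ∫₀^π R·e^{−R²·cos(2θ)}·sin(R²·sin(2θ) − θ) dθ equals −√π. -/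
/-!
The integrand is the real part of `γ'(θ) e^{-γ(θ)²}` for the arc `γ(θ) = R e^{iθ}`. Since `e^{-z²}`
is entire it has a primitive `G`, so the arc integral is `G(-R) - G(R) = -∫_{-R}^{R} e^{-x²} dx`,
which tends to `-√π`.
-/

open Real Filter

section Semicircle

open Complex

variable {E : Type*} [NormedAddCommGroup E] [NormedSpace ℂ E] [CompleteSpace E]

theorem intervalIntegral_deriv_smul_comp_eq_sub {f g : ℂ → E} {γ γ' : ℝ → ℂ} {a b : ℝ}
    (hg : ∀ z, HasDerivAt g (f z) z) (hf : Continuous f)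
    (hγ : ∀ t, HasDerivAt γ (γ' t) t) (hγ' : Continuous γ') :
    ∫ t in a..b, γ' t • f (γ t) = g (γ b) - g (γ a) := by
  refine intervalIntegral.integral_eq_sub_of_hasDerivAt (fun t _ => (hg (γ t)).scomp t (hγ t)) ?_
  have hγc : Continuous γ := continuous_iff_continuousAt.2 fun t => (hγ t).continuousAt
  exact (hγ'.smul (hf.comp hγc)).intervalIntegrable a b

theorem hasDerivAt_ofReal_mul_exp_mul_I (R θ : ℝ) :
    HasDerivAt (fun t : ℝ => (R : ℂ) * exp (t * I)) (I * R * exp (θ * I)) θ := by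
  have h := (((hasDerivAt_id (θ : ℂ)).mul_const I).cexp.const_mul (R : ℂ)).comp_ofReal
  simpa [mul_comm, mul_left_comm, mul_assoc] using h

theorem Differentiable.intervalIntegral_semicircle_eq_neg {f : ℂ → E} (hf : Differentiable ℂ f)
    (R : ℝ) :
    ∫ θ in (0:ℝ)..π, (I * R * cexp (θ * I)) • f (R * cexp (θ * I)) = -∫ x in -R..R, f x := by
  obtain ⟨g, hg⟩ := hf.isExactOn_univ
  have hg' : ∀ z, HasDerivAt g (f z) z := fun z => hg z trivial
  have hline : ∫ x in -R..R, f x = g R - g (-R) := by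
    simpa using intervalIntegral_deriv_smul_comp_eq_sub (a := -R) (b := R) hg' hf.continuous
      (fun x => (hasDerivAt_id x).ofReal_comp) continuous_const
  rw [intervalIntegral_deriv_smul_comp_eq_sub hg' hf.continuous
    (hasDerivAt_ofReal_mul_exp_mul_I R) (by fun_prop)]
  simp [hline, exp_pi_mul_I]

theorem re_semicircle_gaussian_integrand (R θ : ℝ) :
    ((I * R * exp (θ * I)) • exp (-(R * exp (θ * I)) ^ 2)).re =
      R * Real.exp (-(R ^ 2 * Real.cos (2 * θ))) * Real.sin (R ^ 2 * Real.sin (2 * θ) - θ) := by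
  have hsq : ((R : ℂ) * exp (θ * I)) ^ 2 = (R ^ 2 : ℝ) * exp ((2 * θ : ℝ) * I) := by
    rw [mul_pow, ← Complex.exp_nat_mul]; push_cast; ring_nf
  have hexp : (I * R * exp (θ * I)) • exp (-(R * exp (θ * I)) ^ 2)
      = R * I * exp (θ * I + -(R * exp (θ * I)) ^ 2) := by
    rw [smul_eq_mul, Complex.exp_add]
    ring
  rw [hexp, hsq]
  simp only [ofReal_mul, ofReal_ofNat, mul_re, ofReal_re, I_re, mul_zero, ofReal_im, I_im, mul_one,
    sub_self, exp_re, add_re, neg_re, re_ofNat, im_ofNat, sub_zero, mul_im, zero_mul, add_zero,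
    Real.exp_zero, one_mul, exp_im, zero_add, add_im, neg_im, zero_sub]
  rw [← neg_sub θ, Real.sin_neg, sub_eq_add_neg]
  ring

theorem intervalIntegral_semicircle_gaussian_eq (R : ℝ) :
    ∫ θ in (0:ℝ)..π, R * Real.exp (-(R ^ 2 * Real.cos (2 * θ))) *
      Real.sin (R ^ 2 * Real.sin (2 * θ) - θ) = -∫ x in -R..R, Real.exp (-x ^ 2) := by
  have hcontour := Differentiable.intervalIntegral_semicircle_eq_neg
    (f := fun z : ℂ => exp (-z ^ 2)) (by fun_prop) R
  have hcont : Continuous fun θ : ℝ => (I * R * exp (θ * I)) • exp (-(R * exp (θ * I)) ^ 2) := by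
    fun_prop
  calc _ = ∫ θ in (0:ℝ)..π, ((I * R * exp (θ * I)) • exp (-(R * exp (θ * I)) ^ 2)).re :=
        intervalIntegral.integral_congr fun θ _ => (re_semicircle_gaussian_integrand R θ).symm
    _ = (∫ θ in (0:ℝ)..π, (I * R * exp (θ * I)) • exp (-(R * exp (θ * I)) ^ 2)).re :=
        intervalIntegral.intervalIntegral_re (hcont.intervalIntegrable 0 π)
    _ = -∫ x in -R..R, Real.exp (-x ^ 2) := by
        simp_rw [hcontour, ← ofReal_pow, ← ofReal_neg, ← ofReal_exp,
          intervalIntegral.integral_ofReal, neg_re, ofReal_re]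

end Semicircle

theorem tendsto_intervalIntegral_exp_neg_sq :
    Tendsto (fun R : ℝ => ∫ x in -R..R, Real.exp (-x ^ 2)) atTop (nhds (√π)) := by
  have h := MeasureTheory.intervalIntegral_tendsto_integral (integrable_exp_neg_mul_sq one_pos)
    tendsto_neg_atTop_atBot tendsto_id
  have hgauss := integral_gaussian 1
  simp only [neg_mul, one_mul, id_eq, div_one] at h hgauss
  rwa [hgauss] at h

theorem strange_integral_gaussian_semicircle_real_part :
    Tendsto (fun R : ℝ =>
      ∫ θ in (0:ℝ)..π,
        R * Real.exp (-(R ^ 2 * Real.cos (2 * θ))) *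
          Real.sin (R ^ 2 * Real.sin (2 * θ) - θ))
      atTop (nhds (-Real.sqrt π)) := by
  simpa only [intervalIntegral_semicircle_gaussian_eq] using tendsto_intervalIntegral_exp_neg_sq.neg
end

section
/- The limit as R → ∞ (R real, R > 0) of the complex integral ∫₀^π i·sin(R·e^{iθ}) dθ equals −π. -/
/-!
Write `z = R e^{iθ}` and `g z = e^{iz}`, so that `i sin z = (g z - g (-z)) / 2`. The point `-z`
runs over the lower half circle while `z` runs over the upper one, so by the mean value property
`∫₀^{2π} g (R e^{iθ}) dθ = 2π g 0 = 2π` the half-circle integral equals `∫₀^π g (R e^{iθ}) dθ - π`.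
Since `|g (R e^{iθ})| = e^{-R sin θ}`, dominated convergence sends the remaining integral to `0`.
-/

open Real Filter Complex MeasureTheory Topology

section MeanValue

variable {E : Type*} [NormedAddCommGroup E] [NormedSpace ℂ E] [CompleteSpace E] {g : ℂ → E}

theorem integral_circleMap_zero_two_pi (hg : Differentiable ℂ g) (R : ℝ) :
    ∫ θ in 0..2 * π, g (circleMap 0 R θ) = (2 * π) • g 0 := by
  have h := hg.diffContOnCl.circleAverage (c := 0) (R := R)
  rw [circleAverage_def] at h
  rw [← h, smul_inv_smul₀ (by positivity)]

theorem neg_circleMap_zero (R θ : ℝ) : -circleMap 0 R θ = circleMap 0 R (θ + π) := by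
  simp [circleMap, add_mul, Complex.exp_add]

theorem integral_comp_neg_circleMap_zero_pi (hg : Differentiable ℂ g) (R : ℝ) :
    ∫ θ in 0..π, g (-circleMap 0 R θ) = (2 * π) • g 0 - ∫ θ in 0..π, g (circleMap 0 R θ) := by
  have hint : ∀ a b : ℝ, IntervalIntegrable (fun θ => g (circleMap 0 R θ)) volume a b :=
    fun a b => (hg.continuous.comp (continuous_circleMap 0 R)).intervalIntegrable a b
  simp_rw [neg_circleMap_zero]
  rw [intervalIntegral.integral_comp_add_right (fun θ => g (circleMap 0 R θ)), zero_add,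
    ← integral_circleMap_zero_two_pi hg R, two_mul,
    ← intervalIntegral.integral_add_adjacent_intervals (hint 0 π) (hint π (π + π)),
    add_sub_cancel_left]

end MeanValue

theorem I_mul_sin_eq (z : ℂ) : I * Complex.sin z = (cexp (I * z) - cexp (I * -z)) / 2 := by
  rw [Complex.sin, mul_neg]
  ring_nf
  rw [I_sq]
  ring

theorem integral_I_mul_sin_circleMap_zero (R : ℝ) :
    ∫ θ in 0..π, I * Complex.sin (circleMap 0 R θ)
      = (∫ θ in 0..π, cexp (I * circleMap 0 R θ)) - π := by
  have hexp : Differentiable ℂ fun z => cexp (I * z) := by fun_prop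
  simp_rw [I_mul_sin_eq]
  rw [intervalIntegral.integral_div, intervalIntegral.integral_sub,
    integral_comp_neg_circleMap_zero_pi hexp]
  · rw [mul_zero, Complex.exp_zero, Complex.real_smul, mul_one]
    push_cast
    ring
  all_goals exact Continuous.intervalIntegrable (by fun_prop) _ _

theorem tendsto_integral_exp_neg_mul_sin_atTop :
    Tendsto (fun R : ℝ => ∫ θ in 0..π, rexp (-(R * Real.sin θ))) atTop (𝓝 0) := by
  have h := intervalIntegral.tendsto_integral_filter_of_dominated_convergence (l := atTop)
    (μ := volume) (a := 0) (b := π) (F := fun R θ => rexp (-(R * Real.sin θ)))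
    (f := fun _ => 0) (fun _ => 1)
    (Eventually.of_forall fun R => (by fun_prop : Continuous _).aestronglyMeasurable) ?_
    intervalIntegrable_const ?_
  · simpa using h
  · filter_upwards [eventually_ge_atTop 0] with R hR
    refine Eventually.of_forall fun θ hθ => ?_
    rw [Set.uIoc_of_le pi_pos.le] at hθ
    have := Real.sin_nonneg_of_nonneg_of_le_pi hθ.1.le hθ.2
    rw [Real.norm_of_nonneg (exp_pos _).le, exp_le_one_iff]
    nlinarith
  · filter_upwards [Measure.ae_ne volume π] with θ hθπ hθ
    rw [Set.uIoc_of_le pi_pos.le] at hθ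
    have hsin : 0 < Real.sin θ := Real.sin_pos_of_pos_of_lt_pi hθ.1 (hθ.2.lt_of_ne hθπ)
    exact tendsto_exp_atBot.comp
      (tendsto_neg_atTop_atBot.comp (tendsto_id.atTop_mul_const hsin))

theorem norm_exp_I_mul_circleMap_zero (R θ : ℝ) :
    ‖cexp (I * circleMap 0 R θ)‖ = rexp (-(R * Real.sin θ)) := by
  simp [norm_exp, circleMap_zero, Complex.mul_re, exp_ofReal_mul_I_re, exp_ofReal_mul_I_im]

/-- Jordan's lemma, in the form of the integral over the upper half circle. -/
theorem tendsto_integral_exp_I_mul_circleMap_zero_atTop :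
    Tendsto (fun R : ℝ => ∫ θ in 0..π, cexp (I * circleMap 0 R θ)) atTop (𝓝 0) := by
  refine squeeze_zero_norm (fun R => ?_) tendsto_integral_exp_neg_mul_sin_atTop
  calc ‖∫ θ in 0..π, cexp (I * circleMap 0 R θ)‖
      ≤ ∫ θ in 0..π, ‖cexp (I * circleMap 0 R θ)‖ :=
        intervalIntegral.norm_integral_le_integral_norm pi_pos.le
    _ = ∫ θ in 0..π, rexp (-(R * Real.sin θ)) := by
        simp_rw [norm_exp_I_mul_circleMap_zero]

theorem contour_integral_sin_z_over_z_semicircle :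
    Tendsto (fun R : ℝ =>
      ∫ θ in (0:ℝ)..π,
        Complex.I * Complex.sin ((R : ℂ) * Complex.exp (Complex.I * (θ : ℂ))))
      atTop (nhds (-(π : ℂ))) := by
  have hz : ∀ R θ : ℝ, (R : ℂ) * cexp (I * θ) = circleMap 0 R θ := fun R θ => by
    rw [circleMap_zero, mul_comm I]
  simp_rw [hz, integral_I_mul_sin_circleMap_zero]
  simpa using tendsto_integral_exp_I_mul_circleMap_zero_atTop.sub_const (π : ℂ)
end

section
/- The limit as R → ∞ (R real, R > 0) of the complex integral ∫₀^π i·R·e^{iθ}·e^{−R²·e^{2iθ}} dθ equals −√π (as a complex number). -/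
open Real Filter Complex Topology MeasureTheory intervalIntegral

theorem hasDerivAt_ofReal_mul_exp_I_mul (R θ : ℝ) :
    HasDerivAt (fun θ : ℝ => (R : ℂ) * exp (I * θ)) (I * R * exp (I * θ)) θ := by
  have h := (((hasDerivAt_id (θ : ℂ)).const_mul I).cexp.const_mul (R : ℂ)).comp_ofReal
  convert h using 1
  · simp
  · simp only [id, mul_one]; ring

section Semicircle

variable {E : Type*} [NormedAddCommGroup E] [NormedSpace ℂ E] [CompleteSpace E]

theorem integral_upperSemicircle_eq_neg_integral {f : ℂ → E} (hf : Differentiable ℂ f) (R : ℝ) :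
    ∫ θ in (0 : ℝ)..π, (I * R * exp (I * θ)) • f (R * exp (I * θ)) = -∫ x in -R..R, f x := by
  obtain ⟨g, hg⟩ := hf.isExactOn_univ
  have hf_cont := hf.continuous
  have arc : ∫ θ in (0 : ℝ)..π, (I * R * exp (I * θ)) • f (R * exp (I * θ)) = g (-R) - g R := by
    rw [integral_eq_sub_of_hasDerivAt
      (fun θ _ => (hg _ trivial).scomp θ (hasDerivAt_ofReal_mul_exp_I_mul R θ))
      (by apply Continuous.intervalIntegrable; fun_prop)]
    simp [mul_comm I, exp_pi_mul_I]
  have diameter : ∫ x in -R..R, f x = g R - g (-R) := by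
    rw [integral_eq_sub_of_hasDerivAt (f := fun x : ℝ => g x)
      (fun x _ => by
        simpa [Function.comp_def] using (hg _ trivial).scomp x (hasDerivAt_id x).ofReal_comp)
      (by apply Continuous.intervalIntegrable; fun_prop)]
    simp
  rw [arc, diameter, neg_sub]

end Semicircle

theorem tendsto_intervalIntegral_neg_self_cexp_neg_sq :
    Tendsto (fun R : ℝ => ∫ x in -R..R, cexp (-(x : ℂ) ^ 2)) atTop (𝓝 (√π : ℂ)) := by
  have hint : Integrable fun x : ℝ => cexp (-(x : ℂ) ^ 2) := by
    simpa using integrable_cexp_neg_mul_sq (b := 1) (by simp)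
  have hval : ∫ x : ℝ, cexp (-(x : ℂ) ^ 2) = √π := by
    simpa [sqrt_eq_rpow, ofReal_cpow pi_pos.le] using integral_gaussian_complex (b := 1) (by simp)
  rw [← hval]
  exact intervalIntegral_tendsto_integral hint tendsto_neg_atTop_atBot tendsto_id

theorem contour_integral_gaussian_semicircle :
    Tendsto (fun R : ℝ =>
      ∫ θ in (0:ℝ)..π,
        Complex.I * (R : ℂ) * Complex.exp (Complex.I * (θ : ℂ)) *
          Complex.exp (-((R : ℂ) ^ 2 * Complex.exp (2 * Complex.I * (θ : ℂ)))))
      atTop (nhds (-(Real.sqrt π) : ℂ)) := by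
  refine tendsto_intervalIntegral_neg_self_cexp_neg_sq.neg.congr fun R => ?_
  rw [← integral_upperSemicircle_eq_neg_integral (f := fun z => cexp (-z ^ 2)) (by fun_prop)]
  refine integral_congr fun θ _ => ?_
  simp only [smul_eq_mul, mul_pow, ← Complex.exp_nat_mul]
  push_cast
  ring_nf
end

section
/- The limit as R → ∞ of the integral ∫₀^π sin(R·cos θ)·cosh(R·sin θ) dθ equals 0. -/
open Real Filter

theorem strange_integral_sin_z_over_z_imaginary_part :
    Tendsto (fun R : ℝ =>
      ∫ θ in (0:ℝ)..π, Real.sin (R * Real.cos θ) * Real.cosh (R * Real.sin θ))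
      atTop (nhds 0) := by
  have h : ∀ R : ℝ,
      (∫ θ in (0:ℝ)..π, Real.sin (R * Real.cos θ) * Real.cosh (R * Real.sin θ)) = 0 := by
    intro R
    have key := intervalIntegral.integral_comp_sub_left (a := (0:ℝ)) (b := π)
      (fun θ => Real.sin (R * Real.cos θ) * Real.cosh (R * Real.sin θ)) π
    simp only [Real.cos_pi_sub, Real.sin_pi_sub, mul_neg, Real.sin_neg, neg_mul,
      intervalIntegral.integral_neg, sub_self, sub_zero] at key
    linarith
  simp only [h]
  exact tendsto_const_nhds
end

section
/- The limit as R → ∞ of the integral ∫₀^π R·e^{−R²·cos(2θ)}·cos(R²·sin(2θ) − θ) dθ equals 0. -/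
open Real Filter

theorem strange_integral_gaussian_semicircle_imaginary_part :
    Tendsto (fun R : ℝ =>
      ∫ θ in (0:ℝ)..π,
        R * Real.exp (-(R ^ 2 * Real.cos (2 * θ))) *
          Real.cos (R ^ 2 * Real.sin (2 * θ) - θ))
      atTop (nhds 0) := by
  have h : ∀ R : ℝ, (∫ θ in (0:ℝ)..π,
      R * Real.exp (-(R ^ 2 * Real.cos (2 * θ))) *
        Real.cos (R ^ 2 * Real.sin (2 * θ) - θ)) = 0 := by
    intro R
    set f : ℝ → ℝ := fun θ => R * Real.exp (-(R ^ 2 * Real.cos (2 * θ))) *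
      Real.cos (R ^ 2 * Real.sin (2 * θ) - θ) with hf
    have h1 : (∫ θ in (0:ℝ)..π, f (π - θ)) = ∫ θ in (0:ℝ)..π, f θ := by
      rw [intervalIntegral.integral_comp_sub_left f π]; norm_num
    have h2 : ∀ θ : ℝ, f (π - θ) = - f θ := by
      intro θ
      have hc : Real.cos (2 * (π - θ)) = Real.cos (2 * θ) := by
        rw [show 2 * (π - θ) = 2 * π - 2 * θ by ring, Real.cos_sub]
        simp
      have hs : Real.sin (2 * (π - θ)) = - Real.sin (2 * θ) := by
        rw [show 2 * (π - θ) = 2 * π - 2 * θ by ring, Real.sin_sub]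
        simp
      have hcc : Real.cos (R ^ 2 * (-Real.sin (2 * θ)) - (π - θ))
          = - Real.cos (R ^ 2 * Real.sin (2 * θ) - θ) := by
        rw [show R ^ 2 * (-Real.sin (2 * θ)) - (π - θ)
            = -((R ^ 2 * Real.sin (2 * θ) - θ) + π) by ring, Real.cos_neg,
          Real.cos_add_pi]
      simp only [hf, hc, hs, hcc]
      ring
    have h3 : (∫ θ in (0:ℝ)..π, f (π - θ)) = - ∫ θ in (0:ℝ)..π, f θ := by
      simp only [h2]
      exact intervalIntegral.integral_neg
    have := h1.symm.trans h3
    linarith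
  have : (fun R : ℝ =>
      ∫ θ in (0:ℝ)..π,
        R * Real.exp (-(R ^ 2 * Real.cos (2 * θ))) *
          Real.cos (R ^ 2 * Real.sin (2 * θ) - θ)) = fun _ => (0:ℝ) := funext h
  rw [this]
  exact tendsto_const_nhds
end
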